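/- arXiv:1512.03288 — 2 statements merged into one kernel-verified Lean document; each statement's English description precedes it below -/
import Mathlib

section
/- Let γ > 1 and let A : ℝ → GL⁺(3,ℝ) be a C² solution of A''(t) = (det A(t))^{1-γ}(A(t)⁻¹)ᵀ. Then there exist constants 0 < c ≤ C such that c(1+|t|)² ≤ tr(A(t)A(t)ᵀ) ≤ C(1+|t|)² for all t ∈ ℝ. -/
/-
Let `X = tr(A Aᵀ)` for an `n × n` solution `A`. By Jacobi's formula
`(det A)' = det A · tr(A⁻¹ A')`, the energy `E = E_K + E_P`, with `E_K = tr(A' A'ᵀ) / 2` and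
`E_P = (det A)^(1-γ) / (γ - 1)`, is conserved. The virial identity
`X'' = 2 tr(A' A'ᵀ) + 2n (det A)^(1-γ) = 4 E_K + 2n(γ - 1) E_P` then pins `X''` between the
positive constants `min 4 (2n(γ - 1)) E` and `max 4 (2n(γ - 1)) E`. Integrating twice traps `X`
between two quadratics with positive leading coefficient; since `X > 0` is continuous, its minimum
on a large compact interval handles the bounded times, and the lower quadratic the rest.
-/
open Matrix Filter Topology
noncomputable section
attribute [local instance] Matrix.normedAddCommGroup Matrix.normedSpace

abbrev M3 := Matrix (Fin 3) (Fin 3) ℝ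

open Set

namespace Matrix

variable {m n : Type*} [Fintype m] [Fintype n]

theorem trace_mul_transpose_eq_sum (M N : Matrix m n ℝ) :
    trace (M * Nᵀ) = ∑ i, ∑ j, M i j * N i j := by
  simp [trace, mul_apply]

theorem trace_mul_transpose_comm (M N : Matrix m n ℝ) : trace (M * Nᵀ) = trace (N * Mᵀ) := by
  rw [← trace_transpose, transpose_mul, transpose_transpose]

theorem trace_mul_transpose_self_nonneg (M : Matrix m n ℝ) : 0 ≤ trace (M * Mᵀ) := by
  simpa [conjTranspose_eq_transpose_of_trivial] using
    (posSemidef_self_mul_conjTranspose M).trace_nonneg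

theorem trace_mul_transpose_self_pos {M : Matrix m n ℝ} (hM : M ≠ 0) : 0 < trace (M * Mᵀ) := by
  refine (trace_mul_transpose_self_nonneg M).lt_of_ne fun h0 => hM ?_
  rw [← trace_mul_conjTranspose_self_eq_zero_iff, conjTranspose_eq_transpose_of_trivial, ← h0]

open Equiv Finset in
theorem det_updateCol_eq_sum [DecidableEq n] (M : Matrix n n ℝ) (i : n) (b : n → ℝ) :
    (M.updateCol i b).det =
      ∑ σ : Perm n, ((Perm.sign σ : ℤ) : ℝ) * ((∏ j ∈ univ.erase i, M (σ j) j) * b (σ i)) := by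
  rw [det_apply']
  refine sum_congr rfl fun σ _ => ?_
  rw [← prod_erase_mul _ _ (mem_univ i), updateCol_self]
  congr 2
  exact prod_congr rfl fun j hj => updateCol_ne (ne_of_mem_erase hj)

end Matrix

section MatrixCurves

variable {m n : Type*} {t : ℝ}

theorem HasDerivAt.matrix_apply [Fintype m] [Fintype n] {f : ℝ → Matrix m n ℝ}
    {f' : Matrix m n ℝ} (h : HasDerivAt f f' t) (i : m) (j : n) :
    HasDerivAt (fun s => f s i j) (f' i j) t :=
  hasDerivAt_pi.mp (hasDerivAt_pi.mp h i) j

theorem HasDerivAt.trace_mul_transpose [Fintype m] [Fintype n] {f g : ℝ → Matrix m n ℝ}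
    {f' g' : Matrix m n ℝ} (hf : HasDerivAt f f' t) (hg : HasDerivAt g g' t) :
    HasDerivAt (fun s => trace (f s * (g s)ᵀ)) (trace (f' * (g t)ᵀ) + trace (f t * g'ᵀ)) t := by
  simp only [trace_mul_transpose_eq_sum, ← Finset.sum_add_distrib]
  exact HasDerivAt.fun_sum fun i _ => HasDerivAt.fun_sum fun j _ =>
    (hf.matrix_apply i j).mul (hg.matrix_apply i j)

theorem HasDerivAt.matrix_det [Fintype n] [DecidableEq n] {f : ℝ → Matrix n n ℝ}
    {f' : Matrix n n ℝ} (h : HasDerivAt f f' t) :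
    HasDerivAt (fun s => (f s).det) (trace ((f t).adjugate * f')) t := by
  simp only [det_apply']
  refine (HasDerivAt.fun_sum fun σ _ =>
    (HasDerivAt.fun_finsetProd fun i _ => h.matrix_apply (σ i) i).const_mul
      ((Equiv.Perm.sign σ : ℤ) : ℝ)).congr_deriv ?_
  simp only [trace, diag, mul_apply, smul_eq_mul, Finset.mul_sum]
  rw [Finset.sum_comm]
  refine Finset.sum_congr rfl fun i _ => ?_
  have hcramer := congrFun (cramer_eq_adjugate_mulVec (f t) (fun k => f' k i)) i
  rw [cramer_apply, det_updateCol_eq_sum, mulVec, dotProduct] at hcramer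
  rw [← hcramer]

end MatrixCurves

theorem quadratic_minorant_of_le_deriv2 {f f' f'' : ℝ → ℝ} {κ : ℝ}
    (hf : ∀ t, HasDerivAt f (f' t) t) (hf' : ∀ t, HasDerivAt f' (f'' t) t)
    (hκ : ∀ t, κ ≤ f'' t) (s t : ℝ) :
    f s + f' s * (t - s) + κ / 2 * (t - s) ^ 2 ≤ f t := by
  set g : ℝ → ℝ := fun u => f u - f' s * (u - s) - κ / 2 * (u - s) ^ 2
  have hg : ∀ u, HasDerivAt g (f' u - f' s - κ * (u - s)) u := fun u => by
    refine (((hf u).fun_sub (((hasDerivAt_id u).sub_const s).const_mul (f' s))).fun_sub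
      ((((hasDerivAt_id u).sub_const s).fun_pow 2).const_mul (κ / 2))).congr_deriv ?_
    simp only [id_eq]; ring
  have hg' : ∀ u, HasDerivAt (fun u => f' u - f' s - κ * (u - s)) (f'' u - κ) u := fun u => by
    simpa using ((hf' u).sub_const (f' s)).fun_sub (((hasDerivAt_id u).sub_const s).const_mul κ)
  have hconvex : ConvexOn ℝ univ g :=
    convexOn_of_hasDerivWithinAt2_nonneg convex_univ
      (continuous_iff_continuousAt.2 fun u => (hg u).continuousAt).continuousOn
      (fun u _ => (hg u).hasDerivWithinAt) (fun u _ => (hg' u).hasDerivWithinAt)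
      (fun u _ => sub_nonneg.2 (hκ u))
  have hmin : IsMinOn g univ s := by
    refine hconvex.isMinOn_of_rightDeriv_eq_zero (by simp) ?_
    rw [(hg s).hasDerivWithinAt.derivWithin (uniqueDiffWithinAt_Ioi s)]
    ring
  have hgt : g s ≤ g t := hmin (mem_univ t)
  simp only [g, sub_self] at hgt
  linarith

theorem quadratic_majorant_of_deriv2_le {f f' f'' : ℝ → ℝ} {Λ : ℝ}
    (hf : ∀ t, HasDerivAt f (f' t) t) (hf' : ∀ t, HasDerivAt f' (f'' t) t)
    (hΛ : ∀ t, f'' t ≤ Λ) (s t : ℝ) :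
    f t ≤ f s + f' s * (t - s) + Λ / 2 * (t - s) ^ 2 := by
  have := quadratic_minorant_of_le_deriv2 (fun u => (hf u).neg) (fun u => (hf' u).neg)
    (fun u => neg_le_neg (hΛ u)) s t
  simp only [Pi.neg_apply] at this
  linarith

theorem quadratic_le_mul_one_add_abs_sq (a b k t : ℝ) :
    a + b * t + k * t ^ 2 ≤ (|a| + |b| + |k|) * (1 + |t|) ^ 2 := by
  have h0 := abs_nonneg t
  have h1 : 1 ≤ (1 + |t|) ^ 2 := by nlinarith
  have h2 : |t| ≤ (1 + |t|) ^ 2 := by nlinarith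
  have h3 : t ^ 2 ≤ (1 + |t|) ^ 2 := by rw [← sq_abs]; nlinarith
  calc a + b * t + k * t ^ 2 ≤ |a| * 1 + |b| * |t| + |k| * t ^ 2 :=
        add_le_add (add_le_add (by simpa using le_abs_self a) (abs_mul b t ▸ le_abs_self _))
          (mul_le_mul_of_nonneg_right (le_abs_self k) (sq_nonneg t))
    _ ≤ |a| * (1 + |t|) ^ 2 + |b| * (1 + |t|) ^ 2 + |k| * (1 + |t|) ^ 2 := by gcongr
    _ = (|a| + |b| + |k|) * (1 + |t|) ^ 2 := by ring

theorem exists_pos_mul_one_add_abs_sq_le {X : ℝ → ℝ} (hX : Continuous X) (hpos : ∀ t, 0 < X t)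
    {a b κ : ℝ} (hκ : 0 < κ) (hquad : ∀ t, a + b * t + κ * t ^ 2 ≤ X t) :
    ∃ c, 0 < c ∧ ∀ t, c * (1 + |t|) ^ 2 ≤ X t := by
  -- `T` is chosen so that `κ t² / 2` dominates `a + b t` for `|t| ≥ T`
  set T := 1 + 2 * (|a| + |b|) / κ
  have hT : 1 ≤ T := le_add_of_nonneg_right (by positivity)
  obtain ⟨t₀, -, ht₀⟩ := (isCompact_Icc (a := -T) (b := T)).exists_isMinOn
    (nonempty_Icc.2 (by linarith)) hX.continuousOn
  have hm : 0 < X t₀ / (1 + T) ^ 2 := div_pos (hpos t₀) (by positivity)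
  refine ⟨min (κ / 8) (X t₀ / (1 + T) ^ 2), lt_min (by positivity) hm, fun t => ?_⟩
  rcases le_or_gt |t| T with ht | ht
  · calc min (κ / 8) (X t₀ / (1 + T) ^ 2) * (1 + |t|) ^ 2 ≤ X t₀ / (1 + T) ^ 2 * (1 + T) ^ 2 :=
        mul_le_mul (min_le_right _ _) (by gcongr) (by positivity) hm.le
      _ = X t₀ := div_mul_cancel₀ _ (by positivity)
      _ ≤ X t := ht₀ (abs_le.1 ht)
  · have hlin : |a| + |b| * |t| ≤ κ / 2 * t ^ 2 := by
      have hκT : κ / 2 * (T - 1) = |a| + |b| := by simp only [T]; field_simp; ring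
      have h1 : 1 ≤ |t| := hT.trans ht.le
      calc |a| + |b| * |t| ≤ (|a| + |b|) * |t| := by nlinarith [abs_nonneg a]
        _ = κ / 2 * (T - 1) * |t| := by rw [hκT]
        _ ≤ κ / 2 * |t| * |t| := by gcongr; linarith
        _ = κ / 2 * t ^ 2 := by rw [mul_assoc, abs_mul_abs_self, sq]
    have hab : -(|a| + |b| * |t|) ≤ a + b * t := by
      nlinarith [neg_abs_le a, neg_abs_le (b * t), abs_mul b t]
    calc min (κ / 8) (X t₀ / (1 + T) ^ 2) * (1 + |t|) ^ 2 ≤ κ / 8 * (2 * |t|) ^ 2 := by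
          gcongr
          · exact min_le_left _ _
          · linarith
      _ = κ / 2 * t ^ 2 := by rw [mul_pow, sq_abs]; ring
      _ ≤ a + b * t + κ * t ^ 2 := by linarith
      _ ≤ X t := hquad t

theorem min_mul_add_le {a b u v : ℝ} (hu : 0 ≤ u) (hv : 0 ≤ v) :
    min a b * (u + v) ≤ a * u + b * v := by
  nlinarith [mul_le_mul_of_nonneg_right (min_le_left a b) hu,
    mul_le_mul_of_nonneg_right (min_le_right a b) hv]

theorem mul_add_le_max_mul {a b u v : ℝ} (hu : 0 ≤ u) (hv : 0 ≤ v) :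
    a * u + b * v ≤ max a b * (u + v) := by
  nlinarith [mul_le_mul_of_nonneg_right (le_max_left a b) hu,
    mul_le_mul_of_nonneg_right (le_max_right a b) hv]

section AffineMotion

variable {n : Type*} [Fintype n] [DecidableEq n]

structure IsAffineMotion (γ : ℝ) (A A' A'' : ℝ → Matrix n n ℝ) : Prop where
  hasDerivAt : ∀ t, HasDerivAt A (A' t) t
  hasDerivAt_deriv : ∀ t, HasDerivAt A' (A'' t) t
  det_pos : ∀ t, 0 < (A t).det
  eq_smul_inv_transpose : ∀ t, A'' t = (A t).det ^ (1 - γ) • ((A t)⁻¹)ᵀ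

def affineEnergy (γ : ℝ) (A A' : ℝ → Matrix n n ℝ) (t : ℝ) : ℝ :=
  trace (A' t * (A' t)ᵀ) / 2 + (A t).det ^ (1 - γ) / (γ - 1)

namespace IsAffineMotion

variable {γ : ℝ} {A A' A'' : ℝ → Matrix n n ℝ}

theorem trace_mul_transpose (h : IsAffineMotion γ A A' A'') (t : ℝ) :
    trace (A'' t * (A t)ᵀ) = Fintype.card n * (A t).det ^ (1 - γ) := by
  rw [h.eq_smul_inv_transpose, smul_mul, trace_smul, ← transpose_mul, trace_transpose,
    mul_nonsing_inv _ (h.det_pos t).ne'.isUnit, trace_one, smul_eq_mul, mul_comm]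

theorem trace_mul_transpose_deriv (h : IsAffineMotion γ A A' A'') (t : ℝ) :
    trace (A'' t * (A' t)ᵀ) = (A t).det ^ (1 - γ) * trace ((A t)⁻¹ * A' t) := by
  rw [h.eq_smul_inv_transpose, smul_mul, trace_smul, ← transpose_mul, trace_transpose,
    trace_mul_comm, smul_eq_mul]

theorem hasDerivAt_det (h : IsAffineMotion γ A A' A'') (t : ℝ) :
    HasDerivAt (fun s => (A s).det) ((A t).det * trace ((A t)⁻¹ * A' t)) t := by
  have hadj : (A t).adjugate = (A t).det • (A t)⁻¹ := by
    rw [inv_def, Ring.inverse_eq_inv', smul_smul, mul_inv_cancel₀ (h.det_pos t).ne', one_smul]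
  simpa [hadj, smul_mul, trace_smul] using (h.hasDerivAt t).matrix_det

theorem hasDerivAt_affineEnergy (h : IsAffineMotion γ A A' A'') (hγ : γ ≠ 1) (t : ℝ) :
    HasDerivAt (affineEnergy γ A A') 0 t := by
  have hK := ((h.hasDerivAt_deriv t).trace_mul_transpose (h.hasDerivAt_deriv t)).div_const 2
  have hP := ((h.hasDerivAt_det t).rpow_const (p := 1 - γ)
    (Or.inl (h.det_pos t).ne')).div_const (γ - 1)
  refine (hK.add hP).congr_deriv ?_
  have hdet := (h.det_pos t).ne'
  have hγ' : γ - 1 ≠ 0 := sub_ne_zero.2 hγ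
  rw [trace_mul_transpose_comm (A' t), h.trace_mul_transpose_deriv, Real.rpow_sub_one hdet]
  field_simp
  ring

theorem affineEnergy_eq (h : IsAffineMotion γ A A' A'') (hγ : γ ≠ 1) (t : ℝ) :
    affineEnergy γ A A' t = affineEnergy γ A A' 0 :=
  is_const_of_deriv_eq_zero (fun s => (h.hasDerivAt_affineEnergy hγ s).differentiableAt)
    (fun s => (h.hasDerivAt_affineEnergy hγ s).deriv) t 0

theorem hasDerivAt_trace_mul_transpose_self (h : IsAffineMotion γ A A' A'') (t : ℝ) :
    HasDerivAt (fun s => trace (A s * (A s)ᵀ)) (2 * trace (A' t * (A t)ᵀ)) t := by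
  refine ((h.hasDerivAt t).trace_mul_transpose (h.hasDerivAt t)).congr_deriv ?_
  rw [trace_mul_transpose_comm (A t)]
  ring

theorem hasDerivAt_two_mul_trace_mul_transpose (h : IsAffineMotion γ A A' A'') (t : ℝ) :
    HasDerivAt (fun s => 2 * trace (A' s * (A s)ᵀ))
      (2 * trace (A' t * (A' t)ᵀ) + 2 * Fintype.card n * (A t).det ^ (1 - γ)) t := by
  refine (((h.hasDerivAt_deriv t).trace_mul_transpose (h.hasDerivAt t)).const_mul 2).congr_deriv ?_
  rw [h.trace_mul_transpose]
  ring

theorem virial_bounds (h : IsAffineMotion γ A A' A'') (hγ : 1 < γ) (t : ℝ) :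
    min 4 (2 * Fintype.card n * (γ - 1)) * affineEnergy γ A A' 0 ≤
        2 * trace (A' t * (A' t)ᵀ) + 2 * Fintype.card n * (A t).det ^ (1 - γ) ∧
      2 * trace (A' t * (A' t)ᵀ) + 2 * Fintype.card n * (A t).det ^ (1 - γ) ≤
        max 4 (2 * Fintype.card n * (γ - 1)) * affineEnergy γ A A' 0 := by
  have hγ' : 0 < γ - 1 := sub_pos.2 hγ
  have hK : 0 ≤ trace (A' t * (A' t)ᵀ) / 2 := by
    have := trace_mul_transpose_self_nonneg (A' t)
    positivity
  have hP : 0 ≤ (A t).det ^ (1 - γ) / (γ - 1) := by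
    have := h.det_pos t
    positivity
  have hsplit : 2 * trace (A' t * (A' t)ᵀ) + 2 * Fintype.card n * (A t).det ^ (1 - γ) =
      4 * (trace (A' t * (A' t)ᵀ) / 2) +
        2 * Fintype.card n * (γ - 1) * ((A t).det ^ (1 - γ) / (γ - 1)) := by
    field_simp
    ring
  rw [← h.affineEnergy_eq hγ.ne' t, affineEnergy, hsplit]
  exact ⟨min_mul_add_le hK hP, mul_add_le_max_mul hK hP⟩

theorem exists_quadratic_growth [Nonempty n] (h : IsAffineMotion γ A A' A'') (hγ : 1 < γ) :
    ∃ c C : ℝ, 0 < c ∧ c ≤ C ∧ ∀ t : ℝ,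
      c * (1 + |t|) ^ 2 ≤ trace (A t * (A t)ᵀ) ∧ trace (A t * (A t)ᵀ) ≤ C * (1 + |t|) ^ 2 := by
  set E := affineEnergy γ A A' 0
  have hE : 0 < E := by
    have := trace_mul_transpose_self_nonneg (A' 0)
    have := h.det_pos 0
    have := sub_pos.2 hγ
    simp only [E, affineEnergy]
    positivity
  have hκ : 0 < min 4 (2 * Fintype.card n * (γ - 1)) * E := by
    have := sub_pos.2 hγ
    have := Fintype.card_pos (α := n)
    positivity
  have hX t : HasDerivAt _ _ t := h.hasDerivAt_trace_mul_transpose_self t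
  have hX' t : HasDerivAt _ _ t := h.hasDerivAt_two_mul_trace_mul_transpose t
  obtain ⟨c, hc, hlower⟩ := exists_pos_mul_one_add_abs_sq_le
    (continuous_iff_continuousAt.2 fun t => (hX t).continuousAt)
    (fun t => trace_mul_transpose_self_pos fun h0 => (h.det_pos t).ne' (by simp [h0]))
    (half_pos hκ) fun t => by
      simpa using quadratic_minorant_of_le_deriv2 hX hX' (fun t => (h.virial_bounds hγ t).1) 0 t
  have hupper t := by
    have := quadratic_majorant_of_deriv2_le hX hX' (fun t => (h.virial_bounds hγ t).2) 0 t
    rw [sub_zero] at this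
    exact this.trans (quadratic_le_mul_one_add_abs_sq _ _ _ t)
  refine ⟨c, _, hc, ?_, fun t => ⟨hlower t, by simpa using hupper t⟩⟩
  simpa using (hlower 0).trans (hupper 0)

end IsAffineMotion

end AffineMotion

/-- quadratic growth of tr(A Aᵀ) for compressible affine motion. -/
theorem stmt5 (γ : ℝ) (hγ : 1 < γ) (A : ℝ → M3)
    (hA : ContDiff ℝ 2 A)
    (hdet : ∀ t : ℝ, 0 < (A t).det)
    (hODE : ∀ t : ℝ, deriv (deriv A) t = ((A t).det ^ (1 - γ)) • ((A t)⁻¹)ᵀ) :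
    ∃ c C : ℝ, 0 < c ∧ c ≤ C ∧ ∀ t : ℝ,
      c * (1 + |t|) ^ 2 ≤ Matrix.trace (A t * (A t)ᵀ) ∧
      Matrix.trace (A t * (A t)ᵀ) ≤ C * (1 + |t|) ^ 2 := by
  have hA' : ContDiff ℝ 1 (deriv A) := hA.deriv'
  have h : IsAffineMotion γ A (deriv A) (deriv (deriv A)) :=
    { hasDerivAt := fun t => (hA.differentiable two_ne_zero t).hasDerivAt
      hasDerivAt_deriv := fun t => (hA'.differentiable one_ne_zero t).hasDerivAt
      det_pos := hdet
      eq_smul_inv_transpose := hODE }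
  exact h.exists_quadratic_growth hγ
end
end

section
/- Suppose α : ℝ → ℝ is C², positive, and satisfies α'' = (1+2α⁻⁶)⁻¹[6α⁻⁷(α')² + b²α⁻³] with b ≠ 0 and the energy identity (1+2α⁻⁶)(α')² + b²α⁻² = e₀ > 0. Then α''(t) > 0 for all t, α(t) ≥ |b|/√e₀ for all t, α'(t) is strictly increasing with α'(t) → √e₀ as t → ∞, and 0 < √e₀ − α'(t) ≲ t⁻² for t ≫ 1. -/
/-!
The energy identity gives `α'² < e₀` and `b² ≤ e₀ α²`, while the equation of motion makes
`α'' > 0`; so `α'` increases strictly and stays below `√e₀`. If `α'` never became positive,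
`α` would be trapped in `[|b|/√e₀, α 0]` on `[0, ∞)`, forcing `α''` to be bounded below by a
positive constant there, which contradicts `α' ≤ 0`. Hence `α' (t₀) > 0` for some `t₀` and `α`
grows at least linearly. Rewriting the energy identity as
`e₀ - α'² = 2 α'² / α⁶ + b² / α²` shows that `√e₀ - α'` is `O(α⁻²) = O(t⁻²)`.
-/

open Filter Topology
noncomputable section

/-- The right-hand side of the equation of motion `α'' = swirlAccel b α α'`. -/
def swirlAccel (b a d : ℝ) : ℝ :=
  (1 + 2 / a ^ 6)⁻¹ * (6 * d ^ 2 / a ^ 7 + b ^ 2 / a ^ 3)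

/-- The energy `swirlEnergy b α α'`, conserved along the flow. -/
def swirlEnergy (b a d : ℝ) : ℝ :=
  (1 + 2 / a ^ 6) * d ^ 2 + b ^ 2 / a ^ 2

section Pointwise

variable {a b d e : ℝ}

lemma swirlAccel_pos (hb : b ≠ 0) (ha : 0 < a) : 0 < swirlAccel b a d := by
  unfold swirlAccel
  positivity

lemma le_swirlAccel {c A : ℝ} (hc : 0 < c) (hca : c ≤ a) (haA : a ≤ A) :
    (1 + 2 / c ^ 6)⁻¹ * (b ^ 2 / A ^ 3) ≤ swirlAccel b a d := by
  have ha : 0 < a := hc.trans_le hca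
  have hA : 0 < A := ha.trans_le haA
  unfold swirlAccel
  gcongr
  exact le_add_of_nonneg_of_le (by positivity) (by gcongr)

lemma sub_sq_eq_of_swirlEnergy_eq (h : swirlEnergy b a d = e) :
    e - d ^ 2 = 2 * d ^ 2 / a ^ 6 + b ^ 2 / a ^ 2 := by
  rw [← h, swirlEnergy]
  ring

lemma sq_lt_of_swirlEnergy_eq (hb : b ≠ 0) (ha : 0 < a) (h : swirlEnergy b a d = e) :
    d ^ 2 < e := by
  have := sub_sq_eq_of_swirlEnergy_eq h
  have : 0 < b ^ 2 / a ^ 2 := by positivity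
  have : 0 ≤ 2 * d ^ 2 / a ^ 6 := by positivity
  linarith

lemma lt_sqrt_of_swirlEnergy_eq (hb : b ≠ 0) (ha : 0 < a) (h : swirlEnergy b a d = e) :
    d < Real.sqrt e :=
  Real.lt_sqrt_of_sq_lt (sq_lt_of_swirlEnergy_eq hb ha h)

lemma sq_le_mul_sq_of_swirlEnergy_eq (ha : 0 < a) (h : swirlEnergy b a d = e) :
    b ^ 2 ≤ e * a ^ 2 := by
  have := sub_sq_eq_of_swirlEnergy_eq h
  have : 0 ≤ 2 * d ^ 2 / a ^ 6 := by positivity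
  rw [← div_le_iff₀ (by positivity)]
  nlinarith [sq_nonneg d]

lemma abs_div_sqrt_le_of_swirlEnergy_eq (ha : 0 < a) (he : 0 < e)
    (h : swirlEnergy b a d = e) : |b| / Real.sqrt e ≤ a := by
  rw [div_le_iff₀ (Real.sqrt_pos.mpr he)]
  calc |b| = Real.sqrt (b ^ 2) := (Real.sqrt_sq_eq_abs b).symm
    _ ≤ Real.sqrt (e * a ^ 2) := Real.sqrt_le_sqrt (sq_le_mul_sq_of_swirlEnergy_eq ha h)
    _ = a * Real.sqrt e := by rw [Real.sqrt_mul he.le, Real.sqrt_sq ha.le, mul_comm]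

lemma sub_sq_le_of_swirlEnergy_eq (hb : b ≠ 0) (ha : 0 < a) (h : swirlEnergy b a d = e) :
    e - d ^ 2 ≤ (2 * e ^ 3 / b ^ 4 + b ^ 2) / a ^ 2 := by
  have hd : d ^ 2 ≤ e := (sq_lt_of_swirlEnergy_eq hb ha h).le
  have he : 0 ≤ e := (sq_nonneg d).trans hd
  have hb4 : b ^ 4 ≤ e ^ 2 * a ^ 4 := by
    have := sq_le_mul_sq_of_swirlEnergy_eq ha h
    have : b ^ 4 ≤ (e * a ^ 2) ^ 2 := by nlinarith [sq_nonneg b]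
    linarith [show (e * a ^ 2) ^ 2 = e ^ 2 * a ^ 4 by ring]
  have key : 2 * d ^ 2 / a ^ 6 ≤ 2 * e ^ 3 / b ^ 4 / a ^ 2 := by
    rw [div_div, div_le_div_iff₀ (by positivity) (by positivity)]
    calc 2 * d ^ 2 * (b ^ 4 * a ^ 2) ≤ 2 * e * (e ^ 2 * a ^ 4 * a ^ 2) := by gcongr
      _ = 2 * e ^ 3 * a ^ 6 := by ring
  rw [sub_sq_eq_of_swirlEnergy_eq h, add_div]
  linarith

lemma sqrt_sub_le_of_swirlEnergy_eq (hb : b ≠ 0) (ha : 0 < a) (hd : 0 ≤ d) (he : 0 < e)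
    (h : swirlEnergy b a d = e) :
    Real.sqrt e - d ≤ (2 * e ^ 3 / b ^ 4 + b ^ 2) / (Real.sqrt e * a ^ 2) := by
  have hse : 0 < Real.sqrt e := Real.sqrt_pos.mpr he
  have hdlt := lt_sqrt_of_swirlEnergy_eq hb ha h
  calc Real.sqrt e - d ≤ (e - d ^ 2) / Real.sqrt e := by
        rw [le_div_iff₀ hse]
        nlinarith [Real.sq_sqrt he.le]
    _ ≤ (2 * e ^ 3 / b ^ 4 + b ^ 2) / a ^ 2 / Real.sqrt e := by
        gcongr
        exact sub_sq_le_of_swirlEnergy_eq hb ha h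
    _ = (2 * e ^ 3 / b ^ 4 + b ^ 2) / (Real.sqrt e * a ^ 2) := by
        rw [div_div, mul_comm (a ^ 2)]

end Pointwise

lemma mul_le_of_monotone_deriv {f : ℝ → ℝ} (hf : Differentiable ℝ f) (hmono : Monotone (deriv f))
    {t₀ t : ℝ} (hf₀ : 0 ≤ f t₀) (hd₀ : 0 ≤ deriv f t₀) (h₁ : t₀ ≤ t) (h₂ : 2 * t₀ ≤ t) :
    deriv f t₀ / 2 * t ≤ f t := by
  have := (convex_Ici t₀).mul_sub_le_image_sub_of_le_deriv hf.continuous.continuousOn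
    hf.differentiableOn (fun y hy => hmono (interior_subset hy)) t₀ Set.self_mem_Ici t h₁ h₁
  nlinarith

lemma tendsto_of_le_of_sub_le_div_sq {f : ℝ → ℝ} {L K T : ℝ} (hle : ∀ t, f t ≤ L)
    (hdecay : ∀ t, T ≤ t → L - f t ≤ K / t ^ 2) : Tendsto f atTop (𝓝 L) := by
  have hK : Tendsto (fun t : ℝ => L - K / t ^ 2) atTop (𝓝 L) := by
    simpa using (tendsto_const_nhds (x := L)).sub
      (tendsto_const_nhds.div_atTop (tendsto_pow_atTop two_ne_zero))
  refine tendsto_of_tendsto_of_tendsto_of_le_of_le' hK tendsto_const_nhds ?_ (.of_forall hle)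
  filter_upwards [eventually_ge_atTop T] with t ht
  linarith [hdecay t ht]

section Trajectory

variable {α : ℝ → ℝ} {b e₀ : ℝ}

lemma exists_deriv_pos_of_swirlAccel {c : ℝ} (hα : Differentiable ℝ α)
    (hα' : Differentiable ℝ (deriv α)) (hc : 0 < c) (hcα : ∀ t, c ≤ α t) (hb : b ≠ 0)
    (hODE : ∀ t, deriv (deriv α) t = swirlAccel b (α t) (deriv α t)) :
    ∃ t₀, 0 < deriv α t₀ := by
  by_contra! hneg
  have hanti : Antitone α := antitone_of_deriv_nonpos hα hneg
  set δ := (1 + 2 / c ^ 6)⁻¹ * (b ^ 2 / α 0 ^ 3)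
  have hδ : 0 < δ := by
    have := hc.trans_le (hcα 0)
    positivity
  have hgrow : ∀ t, 0 ≤ t → δ * t ≤ deriv α t - deriv α 0 := by
    intro t ht
    have := (convex_Ici (0 : ℝ)).mul_sub_le_image_sub_of_le_deriv hα'.continuous.continuousOn
      hα'.differentiableOn (C := δ) (fun y hy => ?_) 0 Set.self_mem_Ici t ht ht
    · simpa using this
    rw [hODE]
    exact le_swirlAccel hc (hcα y) (hanti (interior_subset hy))
  have h := hgrow ((1 - deriv α 0) / δ) (div_nonneg (by linarith [hneg 0]) hδ.le)
  rw [mul_div_cancel₀ _ hδ.ne'] at h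
  linarith [hneg ((1 - deriv α 0) / δ)]

lemma exists_sqrt_sub_deriv_le_div_sq (hα : Differentiable ℝ α) (hmono : Monotone (deriv α))
    (hαpos : ∀ t, 0 < α t) (hb : b ≠ 0) (he₀ : 0 < e₀)
    (hE : ∀ t, swirlEnergy b (α t) (deriv α t) = e₀) {t₀ : ℝ} (ht₀ : 0 < deriv α t₀) :
    ∃ T K : ℝ, 1 ≤ T ∧ 0 < K ∧ ∀ t, T ≤ t →
      0 < Real.sqrt e₀ - deriv α t ∧ Real.sqrt e₀ - deriv α t ≤ K / t ^ 2 := by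
  set m := deriv α t₀
  set C := 2 * e₀ ^ 3 / b ^ 4 + b ^ 2
  refine ⟨max 1 (2 * |t₀|), C / (Real.sqrt e₀ * (m / 2) ^ 2), le_max_left _ _,
    by positivity, fun t ht => ⟨sub_pos.mpr (lt_sqrt_of_swirlEnergy_eq hb (hαpos t) (hE t)), ?_⟩⟩
  have h2t₀ : 2 * t₀ ≤ t := by linarith [le_abs_self t₀, le_max_right 1 (2 * |t₀|)]
  have ht₀t : t₀ ≤ t := by linarith [abs_nonneg t₀, le_abs_self t₀, le_max_right 1 (2 * |t₀|)]
  have htpos : 0 < t := by linarith [le_max_left 1 (2 * |t₀|)]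
  have hlin : m / 2 * t ≤ α t :=
    mul_le_of_monotone_deriv hα hmono (hαpos t₀).le ht₀.le ht₀t h2t₀
  calc Real.sqrt e₀ - deriv α t ≤ C / (Real.sqrt e₀ * α t ^ 2) :=
        sqrt_sub_le_of_swirlEnergy_eq hb (hαpos t) (ht₀.trans_le (hmono ht₀t)).le he₀ (hE t)
    _ ≤ C / (Real.sqrt e₀ * (m / 2 * t) ^ 2) := by gcongr
    _ = C / (Real.sqrt e₀ * (m / 2) ^ 2) / t ^ 2 := by rw [mul_pow, div_div, mul_assoc]

end Trajectory

/-- rotational swirling flow: α'' > 0, α ≥ |b|/√e₀, α' strictly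
increasing with α'(t) → √e₀, and 0 < √e₀ - α'(t) ≲ t⁻² for large t. -/
theorem stmt16 (α : ℝ → ℝ) (b e₀ : ℝ)
    (hα : ContDiff ℝ 2 α) (hαpos : ∀ t : ℝ, 0 < α t)
    (hb : b ≠ 0) (he₀ : 0 < e₀)
    (hODE : ∀ t : ℝ, deriv (deriv α) t
      = (1 + 2 / α t ^ 6)⁻¹ * (6 * (deriv α t) ^ 2 / α t ^ 7 + b ^ 2 / α t ^ 3))
    (henergy : ∀ t : ℝ, (1 + 2 / α t ^ 6) * (deriv α t) ^ 2 + b ^ 2 / α t ^ 2 = e₀) :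
    (∀ t : ℝ, 0 < deriv (deriv α) t) ∧
    (∀ t : ℝ, |b| / Real.sqrt e₀ ≤ α t) ∧
    StrictMono (deriv α) ∧
    Tendsto (deriv α) atTop (nhds (Real.sqrt e₀)) ∧
    ∃ T K : ℝ, 1 ≤ T ∧ 0 < K ∧ ∀ t : ℝ, T ≤ t →
      0 < Real.sqrt e₀ - deriv α t ∧ Real.sqrt e₀ - deriv α t ≤ K / t ^ 2 := by
  have hα₁ : Differentiable ℝ α := hα.differentiable two_ne_zero
  have hacc : ∀ t, 0 < deriv (deriv α) t := fun t => by
    rw [hODE]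
    exact swirlAccel_pos hb (hαpos t)
  have hlb : ∀ t, |b| / Real.sqrt e₀ ≤ α t := fun t =>
    abs_div_sqrt_le_of_swirlEnergy_eq (hαpos t) he₀ (henergy t)
  have hmono : StrictMono (deriv α) := strictMono_of_deriv_pos hacc
  obtain ⟨t₀, ht₀⟩ := exists_deriv_pos_of_swirlAccel hα₁ hα.differentiable_deriv_two
    (by positivity) hlb hb hODE
  obtain ⟨T, K, hT, hK, hdecay⟩ :=
    exists_sqrt_sub_deriv_le_div_sq hα₁ hmono.monotone hαpos hb he₀ henergy ht₀
  have hlim : Tendsto (deriv α) atTop (𝓝 (Real.sqrt e₀)) :=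
    tendsto_of_le_of_sub_le_div_sq (fun t => (lt_sqrt_of_swirlEnergy_eq hb (hαpos t) (henergy t)).le)
      (fun t ht => (hdecay t ht).2)
  exact ⟨hacc, hlb, hmono, hlim, T, K, hT, hK, hdecay⟩
end
end
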